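/- In the 3-dimensional model, the negation of the Euclidean parallel axiom holds for five-point lines: if l is a five-point line and X a point of the model not on l, then there are only finitely many lines of the model through X that intersect l, while there are infinitely many lines of the model through X; hence infinitely many lines through X miss l. -/

import Mathlib

/-! Every model point lies on exactly one vertical line, and a plane with non-horizontal normal
meets each vertical line at most once, so a five-point line is finite. Distinct pentagon
vertices are linearly independent in the plane, so two model points `x`, `y` on distinct
vertical lines span, with the origin, a single plane; its normal `x ⨯₃ y` is non-horizontal.
Hence two distinct model points lie on at most one model line, and only finitely many lines
through `X` meet `l`. Letting `y` run along a vertical line not through `X` gives infinitely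
many five-point lines through `X`. -/

open Real Matrix

noncomputable section

/-- The vertices of the regular pentagon in the horizontal plane of `ℝ³`. -/
def pentagonPt (k : Fin 5) : Fin 3 → ℝ :=
  ![Real.cos (2 * π * (k.val : ℝ) / 5), Real.sin (2 * π * (k.val : ℝ) / 5), 0]

/-- The vertical unit direction. -/
def e3 : Fin 3 → ℝ := ![0, 0, 1]

/-- The vertical line of the model over the `k`-th pentagon vertex. -/
def vertLine (k : Fin 5) : Set (Fin 3 → ℝ) := {x | ∃ t : ℝ, x = pentagonPt k + t • e3}

/-- The points of the model: the union of the five vertical lines. -/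
def ModelPoints : Set (Fin 3 → ℝ) := ⋃ k, vertLine k

/-- Euclidean dot product in `ℝ³`. -/
def dot (n x : Fin 3 → ℝ) : ℝ := n 0 * x 0 + n 1 * x 1 + n 2 * x 2

/-- A five-point line of the model: the trace on the model points of a plane through the
origin with non-horizontal normal (such a plane contains no vertical line). -/
def IsFivePointLine (l : Set (Fin 3 → ℝ)) : Prop :=
  ∃ n : Fin 3 → ℝ, n 2 ≠ 0 ∧ l = {x ∈ ModelPoints | dot n x = 0}

/-- A line of the model: a vertical line or a five-point line. -/
def IsModelLine (l : Set (Fin 3 → ℝ)) : Prop :=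
  (∃ k, l = vertLine k) ∨ IsFivePointLine l

def fivePointLine (n : Fin 3 → ℝ) : Set (Fin 3 → ℝ) := {x ∈ ModelPoints | dot n x = 0}

lemma dot_eq_dotProduct (n x : Fin 3 → ℝ) : dot n x = n ⬝ᵥ x := by
  simp [dot, dotProduct, Fin.sum_univ_three]

lemma pentagonPt_det_ne_zero {j k : Fin 5} (h : j ≠ k) :
    pentagonPt j 0 * pentagonPt k 1 - pentagonPt j 1 * pentagonPt k 0 ≠ 0 := by
  have hdet : pentagonPt j 0 * pentagonPt k 1 - pentagonPt j 1 * pentagonPt k 0 =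
      sin (2 * π * (k.val : ℝ) / 5 - 2 * π * (j.val : ℝ) / 5) := by
    simp only [pentagonPt, cons_val_zero, cons_val_one, sin_sub]
    ring
  rw [hdet, Ne, sin_eq_zero_iff]
  rintro ⟨m, hm⟩
  have hreal : (m : ℝ) * 5 = 2 * ((k.val : ℝ) - j.val) := by
    have := pi_pos
    apply mul_right_cancel₀ pi_ne_zero
    linarith
  have hint : m * 5 = 2 * ((k.val : ℤ) - j.val) := by exact_mod_cast hreal
  have : j.val ≠ k.val := Fin.val_ne_of_ne h
  omega

lemma mem_vertLine_iff {x : Fin 3 → ℝ} {k : Fin 5} :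
    x ∈ vertLine k ↔ x 0 = pentagonPt k 0 ∧ x 1 = pentagonPt k 1 := by
  constructor
  · rintro ⟨t, rfl⟩
    simp [e3]
  · rintro ⟨h0, h1⟩
    refine ⟨x 2, funext fun i => ?_⟩
    fin_cases i <;> simp [h0, h1, e3, pentagonPt]

lemma mem_modelPoints_iff {x : Fin 3 → ℝ} : x ∈ ModelPoints ↔ ∃ k, x ∈ vertLine k :=
  Set.mem_iUnion

lemma eq_of_mem_vertLine {x : Fin 3 → ℝ} {j k : Fin 5} (hj : x ∈ vertLine j)
    (hk : x ∈ vertLine k) : j = k := by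
  rw [mem_vertLine_iff] at hj hk
  by_contra hjk
  apply pentagonPt_det_ne_zero hjk
  rw [← hj.1, ← hj.2, ← hk.1, ← hk.2]
  ring

lemma cross_apply_two_ne_zero {x y : Fin 3 → ℝ} {j k : Fin 5} (hx : x ∈ vertLine j)
    (hy : y ∈ vertLine k) (hjk : j ≠ k) : (x ⨯₃ y) 2 ≠ 0 := by
  rw [mem_vertLine_iff] at hx hy
  simpa [cross_apply, hx.1, hx.2, hy.1, hy.2] using pentagonPt_det_ne_zero hjk

lemma fivePointLine_inter_vertLine_subsingleton {n : Fin 3 → ℝ} (hn : n 2 ≠ 0) (k : Fin 5) :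
    (fivePointLine n ∩ vertLine k).Subsingleton := by
  rintro x ⟨⟨-, hnx⟩, hx⟩ y ⟨⟨-, hny⟩, hy⟩
  rw [mem_vertLine_iff] at hx hy
  have h2 : x 2 = y 2 := by
    apply mul_left_cancel₀ hn
    simp only [dot] at hnx hny
    rw [hx.1, hx.2] at hnx
    rw [hy.1, hy.2] at hny
    linarith
  funext i
  fin_cases i
  exacts [hx.1.trans hy.1.symm, hx.2.trans hy.2.symm, h2]

lemma fivePointLine_finite {n : Fin 3 → ℝ} (hn : n 2 ≠ 0) : (fivePointLine n).Finite := by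
  refine (Set.finite_iUnion fun k =>
    (fivePointLine_inter_vertLine_subsingleton hn k).finite).subset ?_
  intro x hx
  obtain ⟨k, hk⟩ := mem_modelPoints_iff.mp hx.1
  exact Set.mem_iUnion.mpr ⟨k, hx, hk⟩

lemma fivePointLine_eq_of_smul_eq {m n : Fin 3 → ℝ} {a b : ℝ} (ha : a ≠ 0) (hb : b ≠ 0)
    (h : a • m = b • n) : fivePointLine m = fivePointLine n := by
  refine Set.ext fun x => and_congr_right fun _ => ?_
  have hdot : a * dot m x = b * dot n x := by
    rw [dot_eq_dotProduct, dot_eq_dotProduct, ← smul_eq_mul, ← smul_dotProduct, h,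
      smul_dotProduct, smul_eq_mul]
  rw [← mul_eq_zero_iff_left ha, hdot, mul_eq_zero_iff_left hb]

lemma smul_eq_smul_of_cross_eq_zero {m n : Fin 3 → ℝ} (h : m ⨯₃ n = 0) :
    n 2 • m = m 2 • n := by
  have h0 : m 1 * n 2 - m 2 * n 1 = 0 := congrFun h 0
  have h1 : m 2 * n 0 - m 0 * n 2 = 0 := congrFun h 1
  funext i
  fin_cases i <;> simp only [Fin.zero_eta, Fin.mk_one, Fin.reduceFinMk, Pi.smul_apply, smul_eq_mul]
    <;> linarith

lemma mem_fivePointLine_cross_left {x y : Fin 3 → ℝ} (hx : x ∈ ModelPoints) :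
    x ∈ fivePointLine (x ⨯₃ y) :=
  ⟨hx, by rw [dot_eq_dotProduct, dotProduct_comm, dot_self_cross]⟩

lemma mem_fivePointLine_cross_right {x y : Fin 3 → ℝ} (hy : y ∈ ModelPoints) :
    y ∈ fivePointLine (x ⨯₃ y) :=
  ⟨hy, by rw [dot_eq_dotProduct, dotProduct_comm, dot_cross_self]⟩

lemma IsFivePointLine.subset_modelPoints {L : Set (Fin 3 → ℝ)} (hL : IsFivePointLine L) :
    L ⊆ ModelPoints := by
  obtain ⟨n, -, rfl⟩ := hL
  exact fun _ hx => hx.1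

lemma IsFivePointLine.eq_fivePointLine_cross {L : Set (Fin 3 → ℝ)} (hL : IsFivePointLine L)
    {x y : Fin 3 → ℝ} {j k : Fin 5} (hxL : x ∈ L) (hyL : y ∈ L) (hx : x ∈ vertLine j)
    (hy : y ∈ vertLine k) (hjk : j ≠ k) : L = fivePointLine (x ⨯₃ y) := by
  obtain ⟨n, hn, rfl⟩ := hL
  have hnx : n ⬝ᵥ x = 0 := by rw [← dot_eq_dotProduct]; exact hxL.2
  have hny : n ⬝ᵥ y = 0 := by rw [← dot_eq_dotProduct]; exact hyL.2
  have hcross : n ⨯₃ (x ⨯₃ y) = 0 := by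
    rw [cross_cross_eq_smul_sub_smul', hny, dotProduct_comm, hnx, zero_smul, zero_smul, sub_zero]
  exact fivePointLine_eq_of_smul_eq (cross_apply_two_ne_zero hx hy hjk) hn
    (smul_eq_smul_of_cross_eq_zero hcross)

lemma IsFivePointLine.eq_of_mem_vertLine {L : Set (Fin 3 → ℝ)} (hL : IsFivePointLine L)
    {x y : Fin 3 → ℝ} {k : Fin 5} (hxL : x ∈ L) (hyL : y ∈ L) (hx : x ∈ vertLine k)
    (hy : y ∈ vertLine k) : x = y := by
  obtain ⟨n, hn, rfl⟩ := hL
  exact fivePointLine_inter_vertLine_subsingleton hn k ⟨hxL, hx⟩ ⟨hyL, hy⟩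

lemma setOf_isModelLine_mem_mem_subsingleton {x y : Fin 3 → ℝ} (hxy : x ≠ y) :
    {L | IsModelLine L ∧ x ∈ L ∧ y ∈ L}.Subsingleton := by
  rintro L ⟨hL, hxL, hyL⟩ L' ⟨hL', hxL', hyL'⟩
  rcases hL with ⟨j, rfl⟩ | hL <;> rcases hL' with ⟨k, rfl⟩ | hL'
  · rw [eq_of_mem_vertLine hxL hxL']
  · exact absurd (hL'.eq_of_mem_vertLine hxL' hyL' hxL hyL) hxy
  · exact absurd (hL.eq_of_mem_vertLine hxL hyL hxL' hyL') hxy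
  · obtain ⟨j, hx⟩ := mem_modelPoints_iff.mp (hL.subset_modelPoints hxL)
    obtain ⟨k, hy⟩ := mem_modelPoints_iff.mp (hL.subset_modelPoints hyL)
    obtain rfl | hjk := eq_or_ne j k
    · exact absurd (hL.eq_of_mem_vertLine hxL hyL hx hy) hxy
    · rw [hL.eq_fivePointLine_cross hxL hyL hx hy hjk,
        hL'.eq_fivePointLine_cross hxL' hyL' hx hy hjk]

lemma setOf_isModelLine_mem_infinite {X : Fin 3 → ℝ} (hX : X ∈ ModelPoints) :
    {L | IsModelLine L ∧ X ∈ L}.Infinite := by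
  obtain ⟨k, hXk⟩ := mem_modelPoints_iff.mp hX
  obtain ⟨j, hjk⟩ := exists_ne k
  set Y : ℝ → Fin 3 → ℝ := fun s => pentagonPt j + s • e3
  have hYj (s : ℝ) : Y s ∈ vertLine j := ⟨s, rfl⟩
  have hYL (s : ℝ) : Y s ∈ fivePointLine (X ⨯₃ Y s) :=
    mem_fivePointLine_cross_right (mem_modelPoints_iff.mpr ⟨j, hYj s⟩)
  have hfive (s : ℝ) : IsFivePointLine (fivePointLine (X ⨯₃ Y s)) :=
    ⟨_, cross_apply_two_ne_zero hXk (hYj s) hjk.symm, rfl⟩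
  refine Set.infinite_of_injective_forall_mem (fun s s' hss' => ?_)
    fun s => ⟨Or.inr (hfive s), mem_fivePointLine_cross_left hX⟩
  have hYY : Y s = Y s' :=
    (hfive s').eq_of_mem_vertLine (hss' ▸ hYL s) (hYL s') (hYj s) (hYj s')
  simpa [Y, pentagonPt, e3] using congrFun hYY 2

/-- The negation of the Euclidean parallel axiom for five-point lines: if `l` is a
five-point line and `X` a model point not on `l`, then only finitely many model lines
through `X` meet `l`, while there are infinitely many model lines through `X`; hence
infinitely many model lines through `X` miss `l`. -/
theorem model_many_parallels :
    ∀ l : Set (Fin 3 → ℝ), IsFivePointLine l →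
    ∀ X : Fin 3 → ℝ, X ∈ ModelPoints → X ∉ l →
      {L : Set (Fin 3 → ℝ) | IsModelLine L ∧ X ∈ L ∧ (L ∩ l).Nonempty}.Finite ∧
      {L : Set (Fin 3 → ℝ) | IsModelLine L ∧ X ∈ L}.Infinite ∧
      {L : Set (Fin 3 → ℝ) | IsModelLine L ∧ X ∈ L ∧ L ∩ l = ∅}.Infinite := by
  rintro l ⟨n, hn, rfl⟩ X hX hXl
  have hmeet :
      {L : Set (Fin 3 → ℝ) | IsModelLine L ∧ X ∈ L ∧ (L ∩ fivePointLine n).Nonempty}.Finite := by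
    refine ((fivePointLine_finite hn).biUnion fun y hy =>
      (setOf_isModelLine_mem_mem_subsingleton (ne_of_mem_of_not_mem hy hXl).symm).finite).subset ?_
    rintro L ⟨hL, hXL, y, hyL, hyl⟩
    exact Set.mem_biUnion hyl ⟨hL, hXL, hyL⟩
  have hall := setOf_isModelLine_mem_infinite hX
  refine ⟨hmeet, hall, (hall.sdiff hmeet).mono ?_⟩
  rintro L ⟨⟨hL, hXL⟩, hne⟩
  exact ⟨hL, hXL, Set.not_nonempty_iff_eq_empty.mp fun h => hne ⟨hL, hXL, h⟩⟩

end
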